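/- arXiv:1706.08327 — 2 statements merged into one kernel-verified Lean document; each statement's English description precedes it below -/
import Mathlib

section
/- Let π be a probability measure on a measurable space Θ, let g: Θ → ℝ^s be a bounded measurable function, and let Δ ∈ ℝ^s. Assume 0 < ∫ exp(−⟨Δ, g(θ)⟩) π(dθ) < ∞ and let π̃ be the probability measure whose density with respect to π is exp(−⟨Δ, g(θ)⟩) / ∫ exp(−⟨Δ, g⟩) dπ. Then KL(π, π̃) ≤ log ∫ exp(‖∫ g dπ − g(θ)‖ · ‖Δ‖) π(dθ). -/
/-!
The Radon–Nikodym derivative of `π` with respect to the Gibbs measure `π̃ ∝ exp (-φ) π` is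
`Z exp φ`, so `KL(π, π̃) = log Z + 𝔼_π φ = log 𝔼_π exp (𝔼_π φ - φ)`. For `φ = ⟪Δ, g⟫` the
exponent is `⟪Δ, ∫ g dπ - g⟫ ≤ ‖∫ g dπ - g‖ ‖Δ‖` by Cauchy–Schwarz, and `log ∘ ∫` is monotone.
-/

open MeasureTheory
open scoped RealInnerProductSpace

/-- Kullback–Leibler divergence `KL(μ, ν) = ∫ log (dμ/dν) dμ`. -/
noncomputable def KLdiv {Θ : Type*} [MeasurableSpace Θ] (μ ν : Measure Θ) : ℝ :=
  ∫ θ, Real.log ((μ.rnDeriv ν θ).toReal) ∂μ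

section Gibbs

variable {Θ : Type*} [MeasurableSpace Θ] {π : Measure Θ}

theorem KLdiv_withDensity_ofReal [SigmaFinite π] {f : Θ → ℝ} (hf : AEMeasurable f π)
    (hf_pos : ∀ᵐ θ ∂π, 0 < f θ) :
    KLdiv π (π.withDensity fun θ => ENNReal.ofReal (f θ)) = -∫ θ, Real.log (f θ) ∂π := by
  have hrn : π.rnDeriv (π.withDensity fun θ => ENNReal.ofReal (f θ)) =ᵐ[π]
      fun θ => (ENNReal.ofReal (f θ))⁻¹ := by
    filter_upwards [Measure.rnDeriv_withDensity_right π π hf.ennreal_ofReal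
      (by filter_upwards [hf_pos] with θ hθ using ENNReal.ofReal_pos.mpr hθ |>.ne')
      (ae_of_all _ fun _ => ENNReal.ofReal_ne_top), π.rnDeriv_self] with θ hθ hself
    rw [hθ, hself, mul_one]
  rw [KLdiv, ← integral_neg]
  refine integral_congr_ae ?_
  filter_upwards [hrn, hf_pos] with θ hθ hfθ
  rw [hθ, ENNReal.toReal_inv, ENNReal.toReal_ofReal hfθ.le, Real.log_inv]

theorem integral_exp_sub (c : ℝ) (φ : Θ → ℝ) :
    ∫ θ, Real.exp (c - φ θ) ∂π = Real.exp c * ∫ θ, Real.exp (-φ θ) ∂π := by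
  simp_rw [sub_eq_add_neg, Real.exp_add, integral_const_mul]

theorem KLdiv_withDensity_exp_neg [IsProbabilityMeasure π] {φ : Θ → ℝ}
    (hφ : Integrable φ π) (hZ : 0 < ∫ θ, Real.exp (-φ θ) ∂π) :
    KLdiv π (π.withDensity fun θ =>
        ENNReal.ofReal (Real.exp (-φ θ) / ∫ θ', Real.exp (-φ θ') ∂π)) =
      Real.log (∫ θ, Real.exp ((∫ θ', φ θ' ∂π) - φ θ) ∂π) := by
  have hlog : ∀ θ, Real.log (Real.exp (-φ θ) / ∫ θ', Real.exp (-φ θ') ∂π) =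
      -(φ θ + Real.log (∫ θ', Real.exp (-φ θ') ∂π)) := fun θ => by
    rw [Real.log_div (Real.exp_ne_zero _) hZ.ne', Real.log_exp]; ring
  rw [KLdiv_withDensity_ofReal (by have := hφ.aemeasurable; fun_prop)
      (ae_of_all _ fun θ => div_pos (Real.exp_pos _) hZ),
    integral_exp_sub, Real.log_mul (Real.exp_ne_zero _) hZ.ne', Real.log_exp]
  simp_rw [hlog, integral_neg, neg_neg]
  rw [integral_add hφ (integrable_const _), integral_const, probReal_univ, one_smul]

end Gibbs

theorem stmt1_general {Θ : Type*} [MeasurableSpace Θ] (π : Measure Θ) [IsProbabilityMeasure π]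
    {s : ℕ} (g : Θ → EuclideanSpace ℝ (Fin s)) (hg_meas : Measurable g)
    (hg_bdd : ∃ C : ℝ, ∀ θ, ‖g θ‖ ≤ C) (Δ : EuclideanSpace ℝ (Fin s))
    (Z : ℝ) (hZ : Z = ∫ θ, Real.exp (-⟪Δ, g θ⟫) ∂π)
    (hZpos : 0 < Z)
    (πt : Measure Θ)
    (hπt : πt = π.withDensity fun θ => ENNReal.ofReal (Real.exp (-⟪Δ, g θ⟫) / Z)) :
    KLdiv π πt ≤ Real.log (∫ θ, Real.exp (‖(∫ θ', g θ' ∂π) - g θ‖ * ‖Δ‖) ∂π) := by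
  obtain ⟨C, hC⟩ := hg_bdd
  subst hZ hπt
  have hg_int : Integrable g π := .of_bound hg_meas.aestronglyMeasurable C (ae_of_all _ hC)
  set m := ∫ θ', g θ' ∂π
  have hbound_int : Integrable (fun θ => Real.exp (‖m - g θ‖ * ‖Δ‖)) π :=
    .of_bound (by fun_prop) (Real.exp ((‖m‖ + C) * ‖Δ‖)) (ae_of_all _ fun θ => by
      rw [Real.norm_of_nonneg (Real.exp_pos _).le]
      gcongr
      exact (norm_sub_le _ _).trans (by linarith [hC θ]))
  rw [KLdiv_withDensity_exp_neg (hg_int.const_inner Δ) hZpos, integral_inner hg_int]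
  refine Real.log_le_log (by rw [integral_exp_sub]; positivity) ?_
  refine integral_mono_of_nonneg (ae_of_all _ fun _ => (Real.exp_pos _).le) hbound_int
    (ae_of_all _ fun θ => Real.exp_le_exp.mpr ?_)
  rw [← inner_sub_right, mul_comm]
  exact real_inner_le_norm _ _

theorem stmt1 {Θ : Type*} [MeasurableSpace Θ] (π : Measure Θ) [IsProbabilityMeasure π]
    {s : ℕ} (g : Θ → EuclideanSpace ℝ (Fin s)) (hg_meas : Measurable g)
    (hg_bdd : ∃ C : ℝ, ∀ θ, ‖g θ‖ ≤ C) (Δ : EuclideanSpace ℝ (Fin s))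
    (Z : ℝ) (hZ : Z = ∫ θ, Real.exp (-⟪Δ, g θ⟫) ∂π)
    (hint : Integrable (fun θ => Real.exp (-⟪Δ, g θ⟫)) π)
    (hZpos : 0 < Z)
    (πt : Measure Θ)
    (hπt : πt = π.withDensity fun θ => ENNReal.ofReal (Real.exp (-⟪Δ, g θ⟫) / Z)) :
    KLdiv π πt ≤ Real.log (∫ θ, Real.exp (‖(∫ θ', g θ' ∂π) - g θ‖ * ‖Δ‖) ∂π) :=
  stmt1_general π g hg_meas hg_bdd Δ Z hZ hZpos πt hπt
end

section
/- Let (Θ, 𝔅) be a measurable space, Q a Markov kernel on Θ, and α, α̃: Θ × Θ → [0,1] measurable functions. Define K_α(θ, A) = ∫ 1_A(θ') α(θ, θ') Q(θ, dθ') + 1_A(θ)(1 − ∫ α(θ, θ') Q(θ, dθ')) and define K_{α̃} analogously with α̃. Then for every θ ∈ Θ, the total variation distance satisfies ‖K_α(θ, ·) − K_{α̃}(θ, ·)‖ ≤ ∫ |α(θ, θ') − α̃(θ, θ')| Q(θ, dθ'). -/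
/-!
Write `K_f = mhMeasure μ f θ = μ.withDensity f + (1 - ∫ f) δ_θ`. For a measurable set `A` with
`θ ∉ A` we have `K_f(A) = ∫_A f`, while for `θ ∈ A` the atom absorbs the rejected mass and
`K_f(A) = 1 - ∫_{Aᶜ} f`.
In either case `K_f(A) - K_g(A) = ± ∫_S (f - g)` for `S = A` or `S = Aᶜ`, whose absolute value is
at most `∫ |f - g|`.
-/

open MeasureTheory ProbabilityTheory

/-- Total variation distance between two measures:
`sup` over measurable sets `A` of `|μ A - ν A|`. -/
noncomputable def tvDist {Θ : Type*} [MeasurableSpace Θ] (μ ν : Measure Θ) : ℝ :=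
  ⨆ A : {s : Set Θ // MeasurableSet s}, |(μ A.1).toReal - (ν A.1).toReal|

/-- The Metropolis–Hastings-type kernel with proposal kernel `Q` and acceptance
probability `α`: `K_α(θ, A) = ∫_A α(θ,θ') Q(θ,dθ') + 1_A(θ) (1 - ∫ α(θ,θ') Q(θ,dθ'))`. -/
noncomputable def mhKernel {Θ : Type*} [MeasurableSpace Θ]
    (Q : Kernel Θ Θ) (α : Θ → Θ → ℝ) (θ : Θ) : Measure Θ :=
  (Q θ).withDensity (fun θ' => ENNReal.ofReal (α θ θ')) +
    ENNReal.ofReal (1 - ∫ θ', α θ θ' ∂(Q θ)) • Measure.dirac θ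

namespace MetropolisHastings

variable {Θ : Type*} [MeasurableSpace Θ]

noncomputable def mhMeasure (μ : Measure Θ) (f : Θ → ℝ) (θ : Θ) : Measure Θ :=
  μ.withDensity (fun x => ENNReal.ofReal (f x)) +
    ENNReal.ofReal (1 - ∫ x, f x ∂μ) • Measure.dirac θ

lemma mhKernel_eq_mhMeasure (Q : Kernel Θ Θ) (α : Θ → Θ → ℝ) (θ : Θ) :
    mhKernel Q α θ = mhMeasure (Q θ) (α θ) θ :=
  rfl

variable {μ : Measure Θ} {f g : Θ → ℝ} {A : Set Θ} {θ : Θ}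

lemma abs_setIntegral_le_integral_abs (hf : Integrable f μ) (S : Set Θ) :
    |∫ x in S, f x ∂μ| ≤ ∫ x, |f x| ∂μ :=
  calc |∫ x in S, f x ∂μ| ≤ ∫ x in S, |f x| ∂μ := abs_integral_le_integral_abs
    _ ≤ ∫ x, |f x| ∂μ := setIntegral_le_integral hf.abs (ae_of_all _ fun _ => abs_nonneg _)

lemma withDensity_ofReal_apply (hf : Integrable f μ) (hf0 : ∀ x, 0 ≤ f x)
    (hA : MeasurableSet A) :
    μ.withDensity (fun x => ENNReal.ofReal (f x)) A = ENNReal.ofReal (∫ x in A, f x ∂μ) := by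
  rw [withDensity_apply _ hA, ofReal_integral_eq_lintegral_ofReal hf.restrict (ae_of_all _ hf0)]

lemma mhMeasure_apply_toReal_of_notMem (hf : Integrable f μ) (hf0 : ∀ x, 0 ≤ f x)
    (hA : MeasurableSet A) (hθ : θ ∉ A) :
    (mhMeasure μ f θ A).toReal = ∫ x in A, f x ∂μ := by
  rw [mhMeasure, Measure.add_apply, Measure.smul_apply, Measure.dirac_apply' _ hA,
    Set.indicator_of_notMem hθ, smul_zero, add_zero, withDensity_ofReal_apply hf hf0 hA,
    ENNReal.toReal_ofReal (setIntegral_nonneg hA fun x _ => hf0 x)]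

lemma mhMeasure_apply_toReal_of_mem [IsProbabilityMeasure μ] (hf : Integrable f μ)
    (hf01 : ∀ x, f x ∈ Set.Icc (0 : ℝ) 1) (hA : MeasurableSet A) (hθ : θ ∈ A) :
    (mhMeasure μ f θ A).toReal = 1 - ∫ x in Aᶜ, f x ∂μ := by
  have h_accept : 0 ≤ ∫ x in A, f x ∂μ := setIntegral_nonneg hA fun x _ => (hf01 x).1
  have h_reject : 0 ≤ 1 - ∫ x, f x ∂μ := by
    simpa using integral_mono hf (integrable_const (1 : ℝ)) fun x => (hf01 x).2
  rw [mhMeasure, Measure.add_apply, Measure.smul_apply, Measure.dirac_apply_of_mem hθ,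
    smul_eq_mul, mul_one, withDensity_ofReal_apply hf (fun x => (hf01 x).1) hA,
    ENNReal.toReal_add ENNReal.ofReal_ne_top ENNReal.ofReal_ne_top,
    ENNReal.toReal_ofReal h_accept, ENNReal.toReal_ofReal h_reject, setIntegral_compl hA hf]
  ring

lemma abs_mhMeasure_apply_toReal_sub_le [IsProbabilityMeasure μ]
    (hf : Integrable f μ) (hg : Integrable g μ)
    (hf01 : ∀ x, f x ∈ Set.Icc (0 : ℝ) 1) (hg01 : ∀ x, g x ∈ Set.Icc (0 : ℝ) 1)
    (hA : MeasurableSet A) :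
    |(mhMeasure μ f θ A).toReal - (mhMeasure μ g θ A).toReal| ≤ ∫ x, |f x - g x| ∂μ := by
  by_cases hθ : θ ∈ A
  · rw [mhMeasure_apply_toReal_of_mem hf hf01 hA hθ, mhMeasure_apply_toReal_of_mem hg hg01 hA hθ,
      abs_sub_comm, sub_sub_sub_cancel_left, ← integral_sub hf.restrict hg.restrict]
    exact abs_setIntegral_le_integral_abs (hf.sub hg) Aᶜ
  · rw [mhMeasure_apply_toReal_of_notMem hf (fun x => (hf01 x).1) hA hθ,
      mhMeasure_apply_toReal_of_notMem hg (fun x => (hg01 x).1) hA hθ,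
      ← integral_sub hf.restrict hg.restrict]
    exact abs_setIntegral_le_integral_abs (hf.sub hg) A

end MetropolisHastings

open MetropolisHastings in
theorem stmt11 {Θ : Type*} [MeasurableSpace Θ]
    (Q : Kernel Θ Θ) [IsMarkovKernel Q]
    (α α' : Θ → Θ → ℝ)
    (hα_meas : Measurable (Function.uncurry α)) (hα'_meas : Measurable (Function.uncurry α'))
    (hα01 : ∀ θ θ', α θ θ' ∈ Set.Icc (0 : ℝ) 1)
    (hα'01 : ∀ θ θ', α' θ θ' ∈ Set.Icc (0 : ℝ) 1)
    (θ : Θ) :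
    tvDist (mhKernel Q α θ) (mhKernel Q α' θ) ≤ ∫ θ', |α θ θ' - α' θ θ'| ∂(Q θ) := by
  have hα_int : Integrable (α θ) (Q θ) := Integrable.of_mem_Icc 0 1
    (hα_meas.comp measurable_prodMk_left).aemeasurable (ae_of_all _ (hα01 θ))
  have hα'_int : Integrable (α' θ) (Q θ) := Integrable.of_mem_Icc 0 1
    (hα'_meas.comp measurable_prodMk_left).aemeasurable (ae_of_all _ (hα'01 θ))
  refine ciSup_le fun ⟨A, hA⟩ => ?_
  rw [mhKernel_eq_mhMeasure, mhKernel_eq_mhMeasure]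
  exact abs_mhMeasure_apply_toReal_sub_le hα_int hα'_int (hα01 θ) (hα'01 θ) hA
end
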